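/- Given k ∈ ℕ and ρ ∈ (0,1), there exists n₀ such that: if F is a k-uniform hypergraph on n ≥ n₀ vertices with ρ·C(n,k) ≤ |E(F)| ≤ (1−ρ)·C(n,k), then there exist distinct vertices v, v' with |N_F(v) △ N_F(v')| ≥ ρ(1−ρ)·n^(k−1)/(k+1)!. -/

import Mathlib

open scoped symmDiff

/-- The link of vertex `v`: the `(k-1)`-sets forming an edge with `v`. -/
def link {V : Type*} [Fintype V] [DecidableEq V] (E : Finset (Finset V)) (k : ℕ) (v : V) :
    Finset (Finset V) :=
  (Finset.univ : Finset (Finset V)).filter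
    (fun S => S.card = k - 1 ∧ v ∉ S ∧ insert v S ∈ E)

open Finset Function
open scoped Nat

/-!
Canonical paths in the Johnson graph. List a disjoint edge `A` and non-edge `B` as
`a₀, …, a_r` and `b₀, …, b_r` and replace `aᵢ` by `bᵢ` one index at a time: the walk of
`(r+1)`-sets leaves `E` at some step, where `S ∪ {aᵢ} ∈ E` and `S ∪ {bᵢ} ∉ E` for the
common `r`-set `S`, i.e. `S ∈ N(aᵢ) \ N(bᵢ)`. The triple `(aᵢ, bᵢ, S)`, the ordering of
`S ∪ {aᵢ}` on the walk and the `r` unused entries determine both orderings, so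
`#{(A, B)} · (r+1)! ≤ #{(v, v', S)} · n^r`. For `ρ C(n,r+1) ≤ |E| ≤ (1-ρ) C(n,r+1)` and
large `n` there are about `ρ(1-ρ) C(n,r+1)²` pairs `(A, B)`, and
`∑_{v ≠ v'} |N(v) △ N(v')| = 2 #{(v, v', S)}` is then large enough on average.
-/

lemma Finset.image_update_univ {ι α : Type*} [Fintype ι] [DecidableEq ι] [DecidableEq α]
    (f : ι → α) (p : ι) (x : α) :
    univ.image (update f p x) = insert x ((univ.erase p).image f) := by
  ext y
  simp only [mem_image, mem_univ, true_and, mem_insert, mem_erase]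
  constructor
  · rintro ⟨j, rfl⟩
    by_cases hj : j = p
    · simp [hj]
    · exact Or.inr ⟨j, ⟨hj, trivial⟩, by simp [hj]⟩
  · rintro (rfl | ⟨j, hj, rfl⟩)
    · exact ⟨p, by simp⟩
    · exact ⟨j, by simp [hj]⟩

lemma Nat.sInf_crossing_spec {P : ℕ → Prop} {m : ℕ} (h0 : P 0) (hm : ¬ P m) :
    sInf {i | ¬ P (i + 1)} < m ∧ P (sInf {i | ¬ P (i + 1)}) ∧
      ¬ P (sInf {i | ¬ P (i + 1)} + 1) := by
  obtain ⟨m, rfl⟩ : ∃ m', m = m' + 1 :=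
    Nat.exists_eq_add_one.2 (Nat.pos_of_ne_zero (by rintro rfl; exact hm h0))
  have hne : m ∈ {i | ¬ P (i + 1)} := hm
  refine ⟨Nat.lt_succ_of_le (Nat.sInf_le hne), ?_, Nat.sInf_mem ⟨m, hne⟩⟩
  set i := sInf {i | ¬ P (i + 1)}
  rcases Nat.eq_zero_or_pos i with h | h
  · rwa [h]
  · have := not_not.1 (Nat.notMem_of_lt_sInf (Nat.sub_one_lt_of_lt h))
    rwa [Nat.sub_add_cancel h] at this

lemma Finset.sum_offDiag_card_symmDiff {ι α : Type*} [DecidableEq ι] [DecidableEq α]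
    (s : Finset ι) (f : ι → Finset α) :
    ∑ p ∈ s.offDiag, #(f p.1 ∆ f p.2) = 2 * ∑ p ∈ s.offDiag, #(f p.1 \ f p.2) := by
  have hmem : ∀ p ∈ s.offDiag, p.swap ∈ s.offDiag := fun p hp => by
    rw [mem_offDiag] at hp ⊢
    exact ⟨hp.2.1, hp.1, hp.2.2.symm⟩
  have hswap : ∑ p ∈ s.offDiag, #(f p.2 \ f p.1) = ∑ p ∈ s.offDiag, #(f p.1 \ f p.2) :=
    sum_nbij' Prod.swap Prod.swap hmem hmem (fun _ _ => rfl) (fun _ _ => rfl) (fun _ _ => rfl)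
  have hsplit (p : ι × ι) : #(f p.1 ∆ f p.2) = #(f p.1 \ f p.2) + #(f p.2 \ f p.1) := by
    rw [symmDiff_def, sup_eq_union]
    exact card_union_of_disjoint disjoint_sdiff_sdiff
  simp_rw [hsplit, sum_add_distrib, hswap, two_mul]

open Filter in
lemma eventually_pow_le_two_mul_descFactorial_sq (s : ℕ) :
    ∀ᶠ n : ℕ in atTop, (n : ℝ) ^ (2 * s) ≤ 2 * (n.descFactorial s : ℝ) ^ 2 := by
  have hlim : Tendsto (fun n : ℕ => (1 - (s : ℝ) / n) ^ (2 * s)) atTop (nhds 1) := by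
    simpa using ((tendsto_const_div_atTop_nhds_zero_nat (s : ℝ)).const_sub 1).pow (2 * s)
  filter_upwards [hlim.eventually (lt_mem_nhds (by norm_num : (1 : ℝ) / 2 < 1)),
    eventually_gt_atTop s] with n hhalf hsn
  have hn : (0 : ℝ) < n := by exact_mod_cast (Nat.zero_le s).trans_lt hsn
  have hsub : ((n : ℝ) - s) ^ s ≤ n.descFactorial s := by
    rw [← Nat.cast_sub hsn.le]
    exact_mod_cast (Nat.pow_le_pow_left (by omega) s).trans
      (Nat.pow_sub_le_descFactorial n s)
  rw [one_sub_div hn.ne', div_pow, lt_div_iff₀ (by positivity)] at hhalf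
  calc (n : ℝ) ^ (2 * s) ≤ 2 * (((n : ℝ) - s) ^ s) ^ 2 := by
        rw [← pow_mul, mul_comm s]; linarith
    _ ≤ 2 * (n.descFactorial s : ℝ) ^ 2 := by
        gcongr
        exact pow_nonneg (sub_nonneg.2 (by exact_mod_cast hsn.le)) s

section Orderings

variable {V : Type*} [Fintype V] [DecidableEq V] {m : ℕ} {A : Finset V}

def orderings (m : ℕ) (A : Finset V) : Finset (Fin m → V) :=
  univ.filter fun g => univ.image g = A

lemma injective_of_mem_orderings (hA : #A = m) {g : Fin m → V} (hg : g ∈ orderings m A) :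
    Injective g := by
  rw [orderings, mem_filter] at hg
  have hcard : #(univ.image g) = #(univ : Finset (Fin m)) := by simp [hg.2, hA]
  simpa using card_image_iff.1 hcard

lemma card_orderings (hA : #A = m) : #(orderings m A) = m ! := by
  have hrange : orderings m A = univ.image fun e : Fin m ≃ A => fun j => (e j : V) := by
    ext g
    simp only [orderings, mem_filter, mem_univ, true_and, mem_image]
    constructor
    · intro hg
      have hinj := injective_of_mem_orderings hA (by simpa [orderings] using hg)
      have hmem : ∀ j, g j ∈ A := fun j => hg ▸ mem_image_of_mem g (mem_univ j)
      refine ⟨Equiv.ofBijective (fun j => ⟨g j, hmem j⟩) ?_, rfl⟩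
      refine (Fintype.bijective_iff_injective_and_card _).2 ⟨fun i j h => hinj ?_, ?_⟩
      · exact congrArg Subtype.val h
      · simp [hA]
    · rintro ⟨e, rfl⟩
      ext x
      simp only [mem_image, mem_univ, true_and]
      exact ⟨fun ⟨j, hj⟩ => hj ▸ (e j).2, fun hx => ⟨e.symm ⟨x, hx⟩, by simp⟩⟩
  rw [hrange, card_image_of_injective _ fun e e' h => Equiv.ext fun j => Subtype.ext (congrFun h j),
    card_univ, Fintype.card_equiv ((A.equivFinOfCardEq hA).symm), Fintype.card_fin]

end Orderings

section Mix

variable {V : Type*} {m : ℕ}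

def mix (a b : Fin m → V) (i : ℕ) : Fin m → V := fun j => if (j : ℕ) < i then b j else a j

lemma mix_length (a b : Fin m → V) : mix a b m = b := funext fun j => if_pos j.isLt

lemma mix_apply_self (a b : Fin m → V) (p : Fin m) : mix a b p p = a p := if_neg (lt_irrefl _)

lemma mix_succ (a b : Fin m → V) (p : Fin m) : mix a b (p + 1) = update (mix a b p) p (b p) := by
  ext j
  rcases lt_trichotomy j p with h | rfl | h
  · simp [mix, h.ne, Nat.lt_succ_of_lt (Fin.lt_def.1 h), Fin.lt_def.1 h]
  · simp [mix]
  · simp [mix, h.ne', Fin.lt_def.1 h |>.le.not_gt, Nat.not_lt.2 (Fin.lt_def.1 h : (p : ℕ) < j)]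

lemma mix_mix (a b : Fin m → V) (i : ℕ) : mix (mix a b i) (mix b a i) i = a := by
  ext j
  by_cases h : (j : ℕ) < i <;> simp [mix, h]

lemma mix_injective {a b : Fin m → V} (ha : Injective a) (hb : Injective b)
    (hab : ∀ s t, a s ≠ b t) (i : ℕ) : Injective (mix a b i) := by
  intro s t hst
  by_cases hs : (s : ℕ) < i <;> by_cases ht : (t : ℕ) < i <;>
    simp only [mix, hs, ht, if_true, if_false] at hst
  · exact hb hst
  · exact absurd hst.symm (hab _ _)
  · exact absurd hst (hab _ _)
  · exact ha hst

noncomputable def crossingIndex [DecidableEq V] (E : Finset (Finset V)) (a b : Fin m → V) : ℕ :=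
  sInf {i | univ.image (mix a b (i + 1)) ∉ E}

lemma crossingIndex_spec [DecidableEq V] {E : Finset (Finset V)} {a b : Fin m → V}
    (ha : univ.image a ∈ E) (hb : univ.image b ∉ E) :
    crossingIndex E a b < m ∧ univ.image (mix a b (crossingIndex E a b)) ∈ E ∧
      univ.image (mix a b (crossingIndex E a b + 1)) ∉ E :=
  Nat.sInf_crossing_spec (P := fun i => univ.image (mix a b i) ∈ E) ha (by rwa [mix_length])

end Mix

section CanonicalPaths

variable {V : Type*} [Fintype V] [DecidableEq V] {r : ℕ} {E : Finset (Finset V)}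

lemma mem_link_iff {s : ℕ} {v : V} {S : Finset V} :
    S ∈ link E s v ↔ #S = s - 1 ∧ v ∉ S ∧ insert v S ∈ E := by
  simp [link]

def disjointPairs (E : Finset (Finset V)) (s : ℕ) : Finset (Finset V × Finset V) :=
  (E ×ˢ (powersetCard s univ \ E)).filter fun AB => Disjoint AB.1 AB.2

def orderedDisjointPairs (E : Finset (Finset V)) (s : ℕ) :
    Finset (Σ _ : Finset V × Finset V, (Fin s → V) × (Fin s → V)) :=
  (disjointPairs E s).sigma fun AB => orderings s AB.1 ×ˢ orderings s AB.2

def linkDiffTriples (E : Finset (Finset V)) (s : ℕ) : Finset (Σ _ : V × V, Finset V) :=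
  univ.offDiag.sigma fun vw => link E s vw.1 \ link E s vw.2

lemma card_linkDiffTriples (E : Finset (Finset V)) (s : ℕ) :
    #(linkDiffTriples E s) = ∑ vw ∈ univ.offDiag, #(link E s vw.1 \ link E s vw.2) :=
  card_sigma _ _

noncomputable def crossingData (E : Finset (Finset V))
    (z : Σ _ : Finset V × Finset V, (Fin (r + 1) → V) × (Fin (r + 1) → V)) :
    Σ _ : (Σ _ : V × V, Finset V), (Fin (r + 1) → V) × (Fin r → V) :=
  let a := z.2.1
  let b := z.2.2
  -- `Fin.ofNat` reduces mod `r + 1`; on `orderedDisjointPairs` the index is already `< r + 1`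
  let p : Fin (r + 1) := Fin.ofNat (r + 1) (crossingIndex E a b)
  ⟨⟨(a p, b p), (univ.erase p).image (mix a b p)⟩, (mix a b p, p.removeNth (mix b a p))⟩

lemma of_mem_orderedDisjointPairs (hE : ∀ e ∈ E, #e = r + 1) {z}
    (hz : z ∈ orderedDisjointPairs E (r + 1)) :
    z.1 = (univ.image z.2.1, univ.image z.2.2) ∧ Injective z.2.1 ∧ Injective z.2.2 ∧
      (∀ s t, z.2.1 s ≠ z.2.2 t) ∧ univ.image z.2.1 ∈ E ∧ univ.image z.2.2 ∉ E := by
  obtain ⟨⟨A, B⟩, a, b⟩ := z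
  simp only [orderedDisjointPairs, disjointPairs, orderings, mem_sigma, mem_filter, mem_product,
    mem_sdiff, mem_powersetCard, mem_univ, true_and] at hz
  obtain ⟨⟨⟨hA, ⟨-, hB⟩, hBE⟩, hAB⟩, rfl, rfl⟩ := hz
  refine ⟨rfl, injective_of_mem_orderings (hE _ hA) (by simp [orderings]),
    injective_of_mem_orderings hB (by simp [orderings]), fun s t hst => ?_, hA, hBE⟩
  refine disjoint_left.1 hAB (mem_image_of_mem _ (mem_univ s)) ?_
  rw [show a s = b t from hst]
  exact mem_image_of_mem _ (mem_univ t)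

lemma crossingData_mem (hE : ∀ e ∈ E, #e = r + 1) {z}
    (hz : z ∈ orderedDisjointPairs E (r + 1)) :
    crossingData E z ∈ (linkDiffTriples E (r + 1)).sigma
      fun q => orderings (r + 1) (insert q.1.1 q.2) ×ˢ (univ : Finset (Fin r → V)) := by
  obtain ⟨-, ha, hb, hab, haE, hbE⟩ := of_mem_orderedDisjointPairs hE hz
  obtain ⟨hlt, hmem, hnot⟩ := crossingIndex_spec haE hbE
  set a := z.2.1
  set b := z.2.2
  set p : Fin (r + 1) := Fin.ofNat (r + 1) (crossingIndex E a b)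
  have hp : (p : ℕ) = crossingIndex E a b := by simp [p, Nat.mod_eq_of_lt hlt]
  set S := (univ.erase p).image (mix a b p)
  have hinj := mix_injective ha hb hab p
  have hins_a : insert (a p) S = univ.image (mix a b p) := by
    rw [← image_update_univ, ← mix_apply_self a b p, update_eq_self]
  have hins_b : insert (b p) S = univ.image (mix a b (p + 1)) := by
    rw [mix_succ, image_update_univ]
  have ha_notin : a p ∉ S := by
    rw [← mix_apply_self a b p, hinj.mem_finset_image]; simp
  have hb_notin : b p ∉ S := by
    simp only [S, mem_image, mem_erase, mem_univ, and_true, mix, not_exists, not_and]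
    intro j hj
    split_ifs
    · exact fun h => hj (hb h)
    · exact hab j p
  have hS : #S = r := by simp [S, card_image_of_injective _ hinj]
  have hdata :
      crossingData E z = ⟨⟨(a p, b p), S⟩, (mix a b p, p.removeNth (mix b a p))⟩ := rfl
  rw [hdata]
  simp only [linkDiffTriples, orderings, mem_sigma, mem_offDiag, mem_univ, true_and,
    mem_sdiff, mem_link_iff, mem_product, mem_filter, and_true]
  refine ⟨⟨hab p p, ⟨by rw [hS, Nat.add_sub_cancel], ha_notin, ?_⟩, fun h => hnot ?_⟩,
    hins_a.symm⟩
  · rwa [hins_a, hp]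
  · rw [← hp, ← hins_b]; exact h.2.2

lemma crossingData_injOn (hE : ∀ e ∈ E, #e = r + 1) :
    Set.InjOn (crossingData (r := r) E) (orderedDisjointPairs E (r + 1)) := by
  intro z hz z' hz' hzz'
  obtain ⟨hz1, ha, hb, hab, -⟩ := of_mem_orderedDisjointPairs hE hz
  obtain ⟨hz1', -⟩ := of_mem_orderedDisjointPairs hE hz'
  obtain ⟨AB, a, b⟩ := z
  obtain ⟨AB', a', b'⟩ := z'
  simp only at hz1 hz1' ha hb hab ⊢
  subst hz1 hz1'
  simp only [crossingData, Sigma.mk.injEq, Prod.mk.injEq, heq_eq_eq] at hzz'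
  set p : Fin (r + 1) := Fin.ofNat (r + 1) (crossingIndex E a b)
  set p' : Fin (r + 1) := Fin.ofNat (r + 1) (crossingIndex E a' b')
  obtain ⟨⟨⟨hva, hvb⟩, -⟩, hpath, hrest⟩ := hzz'
  clear_value p p'
  -- the position of `a p` in the ordering `mix a b p` recovers `p`
  have hpp : p = p' := mix_injective ha hb hab p <| by
    rw [mix_apply_self, hva, ← mix_apply_self a' b' p', hpath]
  subst hpp
  have hother : mix b a p = mix b' a' p := by
    rw [← Fin.insertNth_self_removeNth p (mix b a p),
      ← Fin.insertNth_self_removeNth p (mix b' a' p), mix_apply_self, mix_apply_self, hvb, hrest]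
  have haa : a = a' := by rw [← mix_mix a b p, ← mix_mix a' b' p, hpath, hother]
  have hbb : b = b' := by rw [← mix_mix b a p, ← mix_mix b' a' p, hpath, hother]
  rw [haa, hbb]

lemma card_disjointPairs_mul_factorial_le (hE : ∀ e ∈ E, #e = r + 1) :
    #(disjointPairs E (r + 1)) * (r + 1)! ≤
      #(linkDiffTriples E (r + 1)) * Fintype.card V ^ r := by
  have hdom : #(orderedDisjointPairs E (r + 1)) =
      #(disjointPairs E (r + 1)) * ((r + 1)! * (r + 1)!) := by
    refine (card_sigma _ _).trans (sum_const_nat fun AB hAB => ?_)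
    simp only [disjointPairs, mem_filter, mem_product, mem_sdiff, mem_powersetCard] at hAB
    rw [card_product, card_orderings (hE _ hAB.1.1), card_orderings hAB.1.2.1.2]
  have hcod : #((linkDiffTriples E (r + 1)).sigma
      fun q => orderings (r + 1) (insert q.1.1 q.2) ×ˢ (univ : Finset (Fin r → V))) ≤
      #(linkDiffTriples E (r + 1)) * ((r + 1)! * Fintype.card V ^ r) := by
    refine (card_sigma _ _).trans_le (sum_le_card_nsmul _ _ _ fun q hq => ?_)
    simp only [linkDiffTriples, mem_sigma, mem_sdiff, mem_link_iff] at hq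
    obtain ⟨-, ⟨hS, hvS, -⟩, -⟩ := hq
    rw [card_product, card_orderings (by rw [card_insert_of_notMem hvS, hS, Nat.add_sub_cancel]),
      card_univ, Fintype.card_fun, Fintype.card_fin]
  have hinj := card_le_card_of_injOn (crossingData E) (fun z hz => crossingData_mem hE hz)
    (crossingData_injOn hE)
  rw [hdom, ← mul_assoc] at hinj
  refine Nat.le_of_mul_le_mul_right ?_ (Nat.factorial_pos (r + 1))
  calc _ ≤ _ := hinj.trans hcod
    _ = _ := by ring

lemma card_filter_mem_le {s : ℕ} (hE : ∀ e ∈ E, #e = s) (v : V) :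
    #{A ∈ E | v ∈ A} ≤ (Fintype.card V - 1).choose (s - 1) := by
  rw [← card_univ, ← card_erase_of_mem (mem_univ v), ← card_powersetCard]
  refine card_le_card_of_injOn (fun A => A.erase v) (fun A hA => ?_) (fun A hA A' hA' h => ?_)
  · simp only [mem_coe, mem_filter] at hA
    simp [mem_powersetCard, card_erase_of_mem hA.2, hE _ hA.1, erase_subset_erase]
  · simp only [mem_coe, mem_filter] at hA hA'
    rw [← insert_erase hA.2, ← insert_erase hA'.2]
    exact congrArg (insert v) h

lemma card_filter_not_disjoint_le {s : ℕ} (hE : ∀ e ∈ E, #e = s) (B : Finset V) :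
    #{A ∈ E | ¬ Disjoint A B} ≤ #B * (Fintype.card V - 1).choose (s - 1) := by
  have hsub : {A ∈ E | ¬ Disjoint A B} ⊆ B.biUnion fun v => {A ∈ E | v ∈ A} := by
    intro A hA
    rw [mem_filter, not_disjoint_iff] at hA
    obtain ⟨hAE, v, hvA, hvB⟩ := hA
    exact mem_biUnion.2 ⟨v, hvB, mem_filter.2 ⟨hAE, hvA⟩⟩
  exact (card_le_card hsub).trans <| card_biUnion_le.trans <|
    sum_le_card_nsmul _ _ _ fun v _ => card_filter_mem_le hE v

lemma card_disjointPairs_eq_sum (s : ℕ) :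
    #(disjointPairs E s) = ∑ B ∈ powersetCard s univ \ E, #{A ∈ E | Disjoint A B} := by
  simp only [disjointPairs, card_filter, sum_product_right]

lemma card_disjointPairs_ge {ρ : ℝ} (hE : ∀ e ∈ E, #e = r + 1)
    (hn : 2 * ((r : ℝ) + 1) ^ 2 ≤ ρ * Fintype.card V)
    (hlow : ρ * (Fintype.card V).choose (r + 1) ≤ #E)
    (hupp : #E ≤ (1 - ρ) * (Fintype.card V).choose (r + 1)) :
    ρ * (1 - ρ) * ((Fintype.card V).choose (r + 1) : ℝ) ^ 2 / 2 ≤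
      #(disjointPairs E (r + 1)) := by
  set n := Fintype.card V
  set K : ℝ := (n.choose (r + 1) : ℝ)
  have hnpos : 0 < n := by
    by_contra! h
    rw [Nat.le_zero.1 h, Nat.cast_zero, mul_zero] at hn
    have : (0 : ℝ) < 2 * ((r : ℝ) + 1) ^ 2 := by positivity
    linarith
  -- each vertex lies in at most `C(n-1, r) = (r+1) K / n` edges
  have hdeg : 2 * ((r + 1) * (n - 1).choose r : ℝ) ≤ ρ * K := by
    have hid : (n : ℝ) * (n - 1).choose r = K * (r + 1) := by
      have := Nat.add_one_mul_choose_eq (n - 1) r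
      rw [Nat.sub_add_cancel hnpos] at this
      simp only [K]
      exact_mod_cast this
    have hK : 0 ≤ K := Nat.cast_nonneg _
    have hn' : (0 : ℝ) < n := Nat.cast_pos.2 hnpos
    nlinarith
  have hEsub : E ⊆ powersetCard (r + 1) univ := fun A hA =>
    mem_powersetCard.2 ⟨subset_univ A, hE A hA⟩
  have hnonedges : (#(powersetCard (r + 1) univ \ E) : ℝ) = K - #E := by
    rw [card_sdiff_of_subset hEsub, Nat.cast_sub (card_le_card hEsub), card_powersetCard,
      card_univ]
  have hfiber :
      ∀ B ∈ powersetCard (r + 1) univ \ E, (#E : ℝ) / 2 ≤ #{A ∈ E | Disjoint A B} := by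
    intro B hB
    have hB : #B = r + 1 := (mem_powersetCard.1 (mem_sdiff.1 hB).1).2
    have hsplit := card_filter_add_card_filter_not (s := E) (p := fun A => Disjoint A B)
    have hmeet : (#{A ∈ E | ¬ Disjoint A B} : ℝ) ≤ (r + 1) * (n - 1).choose r := by
      exact_mod_cast hB ▸ card_filter_not_disjoint_le hE B
    have : (#{A ∈ E | Disjoint A B} : ℝ) + #{A ∈ E | ¬ Disjoint A B} = #E := by
      exact_mod_cast hsplit
    linarith
  calc ρ * (1 - ρ) * K ^ 2 / 2 ≤ (K - #E) * (#E / 2) := by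
        nlinarith [mul_nonneg (sub_nonneg.2 hlow) (sub_nonneg.2 hupp)]
    _ = #(powersetCard (r + 1) univ \ E) • ((#E : ℝ) / 2) := by rw [nsmul_eq_mul, hnonedges]
    _ ≤ ∑ B ∈ powersetCard (r + 1) univ \ E, (#{A ∈ E | Disjoint A B} : ℝ) :=
        card_nsmul_le_sum _ _ _ hfiber
    _ = #(disjointPairs E (r + 1)) := by rw [card_disjointPairs_eq_sum, Nat.cast_sum]

lemma le_two_mul_card_linkDiffTriples_mul {ρ : ℝ} (hρ0 : 0 < ρ) (hρ1 : ρ < 1)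
    (hE : ∀ e ∈ E, #e = r + 1) (hn : 2 * ((r : ℝ) + 1) ^ 2 ≤ ρ * Fintype.card V)
    (hD : (Fintype.card V : ℝ) ^ (2 * (r + 1)) ≤
      2 * ((Fintype.card V).descFactorial (r + 1) : ℝ) ^ 2)
    (hlow : ρ * (Fintype.card V).choose (r + 1) ≤ #E)
    (hupp : #E ≤ (1 - ρ) * (Fintype.card V).choose (r + 1)) :
    ρ * (1 - ρ) * (Fintype.card V : ℝ) ^ (2 * (r + 1)) / (r + 2)! ≤
      2 * #(linkDiffTriples E (r + 1)) * (Fintype.card V : ℝ) ^ r := by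
  set n := Fintype.card V
  set K : ℝ := (n.choose (r + 1) : ℝ)
  have hρ1' := sub_pos.2 hρ1
  have hpaths : (#(disjointPairs E (r + 1)) : ℝ) * (r + 1)! ≤
      #(linkDiffTriples E (r + 1)) * (n : ℝ) ^ r := by
    exact_mod_cast card_disjointPairs_mul_factorial_le hE
  have hpairs := card_disjointPairs_ge hE hn hlow hupp
  have hdesc : (n.descFactorial (r + 1) : ℝ) = (r + 1)! * K := by
    simp only [K]
    exact_mod_cast Nat.descFactorial_eq_factorial_mul_choose n (r + 1)
  have hfact : ((r + 2)! : ℝ) = (r + 2) * (r + 1)! := by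
    push_cast [Nat.factorial_succ]; ring
  calc ρ * (1 - ρ) * (n : ℝ) ^ (2 * (r + 1)) / (r + 2)!
      ≤ ρ * (1 - ρ) * ((r + 2)! * (K ^ 2 * (r + 1)!)) / (r + 2)! := by
        gcongr
        calc (n : ℝ) ^ (2 * (r + 1)) ≤ 2 * ((r + 1)! * K) ^ 2 := hdesc ▸ hD
          _ ≤ (r + 2) * (r + 1)! * (K ^ 2 * (r + 1)!) := by
            nlinarith [mul_nonneg (Nat.cast_nonneg (α := ℝ) r) (sq_nonneg ((r + 1)! * K))]
          _ = _ := by rw [hfact]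
    _ = ρ * (1 - ρ) * K ^ 2 / 2 * (2 * (r + 1)!) := by
        field_simp
    _ ≤ #(disjointPairs E (r + 1)) * (2 * (r + 1)!) := by gcongr
    _ ≤ 2 * #(linkDiffTriples E (r + 1)) * (n : ℝ) ^ r := by linarith

end CanonicalPaths

theorem exists_ne_le_card_symmDiff_link {V : Type*} [Fintype V] [DecidableEq V] {r : ℕ}
    {E : Finset (Finset V)} {ρ : ℝ} (hρ0 : 0 < ρ) (hρ1 : ρ < 1)
    (hE : ∀ e ∈ E, #e = r + 1)
    (hn : 2 * ((r : ℝ) + 1) ^ 2 ≤ ρ * Fintype.card V)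
    (hD : (Fintype.card V : ℝ) ^ (2 * (r + 1)) ≤
      2 * ((Fintype.card V).descFactorial (r + 1) : ℝ) ^ 2)
    (hlow : ρ * (Fintype.card V).choose (r + 1) ≤ #E)
    (hupp : #E ≤ (1 - ρ) * (Fintype.card V).choose (r + 1)) :
    ∃ v w : V, v ≠ w ∧ ρ * (1 - ρ) * (Fintype.card V : ℝ) ^ r / (r + 2)! ≤
      #(link E (r + 1) v ∆ link E (r + 1) w) := by
  set n := Fintype.card V
  set T : ℝ := ρ * (1 - ρ) * (n : ℝ) ^ r / (r + 2)!
  have hone : 1 < n := by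
    have : (1 : ℝ) < n := by
      nlinarith [mul_le_mul_of_nonneg_right hρ1.le (Nat.cast_nonneg (α := ℝ) n),
        (Nat.cast_nonneg r : (0 : ℝ) ≤ r)]
    exact_mod_cast this
  have hn0 : (0 : ℝ) < n := by positivity
  have hT : 0 ≤ T := by have := sub_pos.2 hρ1; positivity
  have hsum : (#(univ : Finset V).offDiag : ℝ) * T ≤
      ∑ vw ∈ univ.offDiag, (#(link E (r + 1) vw.1 ∆ link E (r + 1) vw.2) : ℝ) := by
    rw [← Nat.cast_sum, sum_offDiag_card_symmDiff, ← card_linkDiffTriples, Nat.cast_mul,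
      Nat.cast_two]
    refine le_of_mul_le_mul_right ?_ (pow_pos hn0 r)
    calc (#(univ : Finset V).offDiag : ℝ) * T * n ^ r ≤ n ^ 2 * T * n ^ r := by
          gcongr
          rw [offDiag_card, card_univ]
          exact_mod_cast (Nat.sub_le _ _).trans (sq n).ge
      _ = ρ * (1 - ρ) * n ^ (2 * (r + 1)) / (r + 2)! := by ring
      _ ≤ _ := le_two_mul_card_linkDiffTriples_mul hρ0 hρ1 hE hn hD hlow hupp
  obtain ⟨v, w, hvw⟩ := Fintype.exists_pair_of_one_lt_card hone
  obtain ⟨⟨v, w⟩, hvw, hle⟩ := exists_le_of_sum_le (f := fun _ => T)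
    (g := fun vw => (#(link E (r + 1) vw.1 ∆ link E (r + 1) vw.2) : ℝ))
    ⟨(v, w), mem_offDiag.2 ⟨mem_univ v, mem_univ w, hvw⟩⟩ (by rwa [sum_const, nsmul_eq_mul])
  exact ⟨v, w, (mem_offDiag.1 hvw).2.2, hle⟩

theorem stmt_16 (k : ℕ) (ρ : ℝ) (hρ0 : 0 < ρ) (hρ1 : ρ < 1) :
    ∃ n₀ : ℕ, ∀ (V : Type) (_ : Fintype V) (_ : DecidableEq V),
      n₀ ≤ Fintype.card V →
      ∀ E : Finset (Finset V), (∀ e ∈ E, e.card = k) →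
      ρ * (Nat.choose (Fintype.card V) k : ℝ) ≤ (E.card : ℝ) →
      (E.card : ℝ) ≤ (1 - ρ) * (Nat.choose (Fintype.card V) k : ℝ) →
      ∃ v v' : V, v ≠ v' ∧
        ρ * (1 - ρ) * (Fintype.card V : ℝ) ^ (k - 1) / (Nat.factorial (k + 1) : ℝ)
          ≤ (((link E k v) ∆ (link E k v')).card : ℝ) := by
  rcases k with _ | r
  · refine ⟨0, fun V _ _ _ E _ hlow hupp => ?_⟩
    simp only [Nat.choose_zero_right, Nat.cast_one, mul_one] at hlow hupp
    rcases Nat.eq_zero_or_pos #E with h | h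
    · simp [h] at hlow; linarith
    · have : (1 : ℝ) ≤ #E := by exact_mod_cast h
      linarith
  obtain ⟨n₀, hn₀⟩ := Filter.eventually_atTop.1 <|
    (tendsto_natCast_atTop_atTop.eventually_ge_atTop (2 * ((r : ℝ) + 1) ^ 2 / ρ)).and
      (eventually_pow_le_two_mul_descFactorial_sq (r + 1))
  refine ⟨n₀, fun V _ _ hV E hE hlow hupp => ?_⟩
  obtain ⟨hn, hD⟩ := hn₀ _ hV
  simpa using exists_ne_le_card_symmDiff_link hρ0 hρ1 hE ((div_le_iff₀' hρ0).1 hn) hD hlow hupp
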